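/- arXiv:1509.03722 — 2 statements merged into one kernel-verified Lean document; each statement's English description precedes it below -/
import Mathlib

section
/- Let r ≥ 2 and n ≥ 1 be integers, let a_1, …, a_n be positive integers with gcd(a_i, r) = 1 for all i, and let m ∈ ℤ. Then there exists a unique Laurent polynomial B ∈ ℤ[t, t⁻¹] whose support is contained in {m+1, m+2, …, m+r−1} and which satisfies B(t) · ∏_{i=1}^n (1 + t + ⋯ + t^{a_i−1}) ≡ 1 modulo Φ_r(t) in ℤ[t, t⁻¹] (i.e. Φ_r divides B·∏_{i=1}^n (1 + t + ⋯ + t^{a_i−1}) − 1). -/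
open Polynomial LaurentPolynomial

namespace StmtAux2

open Finset

/-- geometric sum multiplicativity -/
lemma gs_mul (a b : ℕ) :
    (∑ i ∈ range (a*b), (X:ℤ[X])^i) =
      (∑ i ∈ range a, (X:ℤ[X])^i) * (∑ j ∈ range b, ((X:ℤ[X])^a)^j) := by
  have hX : (X:ℤ[X]) - 1 ≠ 0 := fun h => by
    simpa using congrArg (Polynomial.eval 0) h
  apply mul_right_cancel₀ hX
  rw [geom_sum_mul, mul_right_comm, geom_sum_mul, mul_comm ((X:ℤ[X])^a - 1),
    geom_sum_mul, ← pow_mul]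

lemma gs_dvd {r s : ℕ} (h : r ∣ s) :
    (∑ i ∈ range r, (X:ℤ[X])^i) ∣ (∑ i ∈ range s, (X:ℤ[X])^i) := by
  obtain ⟨k, rfl⟩ := h
  rw [gs_mul]
  exact Dvd.intro _ rfl

lemma inv_single {r a : ℕ} (hr : 2 ≤ r) (hcop : Nat.gcd a r = 1) :
    ∃ C : ℤ[X], (∑ i ∈ range r, (X:ℤ[X])^i) ∣ (∑ j ∈ range a, (X:ℤ[X])^j) * C - 1 := by
  obtain ⟨b, -, hb⟩ := Nat.exists_mul_mod_eq_one_of_coprime hcop (by omega)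
  refine ⟨∑ j ∈ range b, ((X:ℤ[X])^a)^j, ?_⟩
  rw [← gs_mul]
  have hab : a * b = r * (a*b/r) + 1 := by
    conv_lhs => rw [← Nat.div_add_mod (a*b) r, hb]
  rw [hab, geom_sum_succ, add_sub_cancel_right]
  exact Dvd.dvd.mul_left (gs_dvd ⟨_, rfl⟩) _

lemma inv_prod {r n : ℕ} (hr : 2 ≤ r) (a : Fin n → ℕ)
    (hcop : ∀ i, Nat.gcd (a i) r = 1) :
    ∃ C : ℤ[X], (∑ i ∈ range r, (X:ℤ[X])^i) ∣
      (∏ i, ∑ j ∈ range (a i), (X:ℤ[X])^j) * C - 1 := by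
  refine Finset.prod_induction _ (fun q => ∃ C : ℤ[X], (∑ i ∈ range r, (X:ℤ[X])^i) ∣ q * C - 1)
    ?_ ⟨1, by simp⟩ (fun i _ => inv_single hr (hcop i))
  rintro x y ⟨c1, h1⟩ ⟨c2, h2⟩
  refine ⟨c1 * c2, ?_⟩
  have : x * y * (c1 * c2) - 1 = (x*c1) * (y*c2 - 1) + (x*c1 - 1) := by ring
  rw [this]
  exact dvd_add (h2.mul_left _) h1


lemma gs_monic {r : ℕ} (hr : 2 ≤ r) : (∑ i ∈ range r, (X:ℤ[X])^i).Monic :=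
  monic_geom_sum_X (by omega)

lemma gs_natDegree {r : ℕ} (hr : 2 ≤ r) :
    (∑ i ∈ range r, (X:ℤ[X])^i).natDegree = r - 1 := by
  have h := geom_sum_mul (X:ℤ[X]) r
  have hX : ((X:ℤ[X]) - 1) ≠ 0 := fun h => by
    simpa using congrArg (Polynomial.eval 0) h
  have h0 : (∑ i ∈ range r, (X:ℤ[X])^i) ≠ 0 := (gs_monic hr).ne_zero
  have := congrArg Polynomial.natDegree h
  rw [natDegree_mul h0 hX] at this
  have hx1 : ((X:ℤ[X]) - 1).natDegree = 1 := by
    simpa using natDegree_X_sub_C (1:ℤ)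
  have hxr : ((X:ℤ[X])^r - 1).natDegree = r := by
    simpa using natDegree_X_pow_sub_C (n := r) (r := (1:ℤ))
  omega

lemma gs_natTrailingDegree {r : ℕ} (hr : 2 ≤ r) :
    (∑ i ∈ range r, (X:ℤ[X])^i).natTrailingDegree = 0 := by
  rw [Polynomial.natTrailingDegree_eq_zero]
  right
  have : r = (r-1) + 1 := by omega
  rw [this, geom_sum_succ]
  simp

lemma gs_coprime_X {r : ℕ} (hr : 2 ≤ r) :
    IsCoprime (∑ i ∈ range r, (X:ℤ[X])^i) (X:ℤ[X]) := by
  obtain ⟨k, rfl⟩ : ∃ k, r = k + 1 := ⟨r-1, by omega⟩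
  refine ⟨1, -(∑ i ∈ range k, (X:ℤ[X])^i), ?_⟩
  rw [one_mul, geom_sum_succ]
  ring

lemma key {r : ℕ} (hr : 2 ≤ r) (m : ℤ) {B : LaurentPolynomial ℤ}
    (hs : B.coeff.support ⊆ Finset.Icc (m+1) (m + (r:ℤ) - 1))
    (hd : (∑ i ∈ range r, (X:ℤ[X])^i).toLaurent ∣ B) : B = 0 := by
  classical
  set Φ : ℤ[X] := ∑ i ∈ range r, (X:ℤ[X])^i with hΦdef
  obtain ⟨s, f, hf⟩ := exists_T_pow B
  have hB : B = toLaurent f * T (-(s:ℤ)) := by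
    rw [hf, mul_T_assoc, add_neg_cancel, T_zero, mul_one]
  by_cases hf0 : f = 0
  · rw [hB, hf0, map_zero, zero_mul]
  exfalso
  obtain ⟨g, hg⟩ := hd
  obtain ⟨u, h, hh⟩ := exists_T_pow g
  have hdvd : Φ ∣ f * X^u := by
    refine ⟨h * X^s, toLaurent_injective ?_⟩
    rw [map_mul, map_mul, map_mul, toLaurent_X_pow, toLaurent_X_pow, hf, hg,
      mul_right_comm (toLaurent Φ * g) (T (s:ℤ)) (T (u:ℤ)), mul_assoc (toLaurent Φ) g, hh,
      mul_assoc]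
  have hΦf : Φ ∣ f := ((gs_coprime_X hr).pow_right).dvd_of_dvd_mul_right hdvd
  obtain ⟨h2, hh2⟩ := hΦf
  have hΦ0 : Φ ≠ 0 := (gs_monic hr).ne_zero
  have hh20 : h2 ≠ 0 := by rintro rfl; rw [mul_zero] at hh2; exact hf0 hh2
  have hdeg : f.natDegree = (r-1) + h2.natDegree := by
    rw [hh2, natDegree_mul hΦ0 hh20, gs_natDegree hr]
  have htr : f.natTrailingDegree = h2.natTrailingDegree := by
    rw [hh2, natTrailingDegree_mul hΦ0 hh20, gs_natTrailingDegree hr, zero_add]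
  have hsupp : ∀ j ∈ f.support, m + 1 + s ≤ (j:ℤ) ∧ (j:ℤ) ≤ m + r - 1 + s := by
    intro j hj
    have hj' : (j:ℤ) ∈ (toLaurent f).coeff.support := by
      rw [toLaurent_support]
      exact Finset.mem_map_of_mem _ hj
    rw [hf, ← T_mul] at hj'
    rw [show (T (s:ℤ) : LaurentPolynomial ℤ) = AddMonoidAlgebra.single (s:ℤ) 1 from rfl] at hj'
    rw [AddMonoidAlgebra.support_coeff_single_mul B 1 (by simp) _] at hj'
    obtain ⟨x, hx, hxe⟩ := Finset.mem_map.mp hj'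
    have hmem := hs hx
    rw [Finset.mem_Icc] at hmem
    rw [addLeftEmbedding_apply] at hxe
    omega
  have h1 := hsupp f.natDegree (natDegree_mem_support_of_nonzero hf0)
  have h2' := hsupp f.natTrailingDegree (natTrailingDegree_mem_support_of_nonzero hf0)
  have h3 := natTrailingDegree_le_natDegree h2
  omega

end StmtAux2

/-- For `r ≥ 2`, `n ≥ 1`, positive integers `a₁, …, aₙ` each coprime to `r`, and any
`m ∈ ℤ`, there is a unique Laurent polynomial `B ∈ ℤ[t,t⁻¹]` supported in
`{m+1, …, m+r-1}` with `B(t) ⬝ ∏ᵢ (1 + t + ⋯ + t^(aᵢ-1)) ≡ 1` modulo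
`Φ_r(t) = 1 + t + ⋯ + t^(r-1)`. -/
theorem stmt_2 (r n : ℕ) (hr : 2 ≤ r) (hn : 1 ≤ n) (a : Fin n → ℕ)
    (ha : ∀ i, 1 ≤ a i) (hcop : ∀ i, Nat.gcd (a i) r = 1) (m : ℤ) :
    ∃! B : LaurentPolynomial ℤ,
      B.coeff.support ⊆ Finset.Icc (m + 1) (m + (r : ℤ) - 1) ∧
      (∑ i ∈ Finset.range r, (X : ℤ[X]) ^ i).toLaurent ∣
        B * ∏ i, (∑ j ∈ Finset.range (a i), (X : ℤ[X]) ^ j).toLaurent - 1 := by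
  classical
  have hPL : (∏ i, (∑ j ∈ Finset.range (a i), (X : ℤ[X]) ^ j).toLaurent) =
      toLaurent (∏ i, ∑ j ∈ Finset.range (a i), (X:ℤ[X])^j) := (map_prod _ _ _).symm
  rw [hPL]
  set Φ : ℤ[X] := ∑ i ∈ Finset.range r, (X:ℤ[X])^i with hΦdef
  set P : ℤ[X] := ∏ i, ∑ j ∈ Finset.range (a i), (X:ℤ[X])^j with hPdef
  obtain ⟨C, hC⟩ := StmtAux2.inv_prod hr a hcop
  -- CL * PL ≡ 1
  have d3 : toLaurent Φ ∣ toLaurent P * toLaurent C - 1 := by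
    have := map_dvd (Polynomial.toLaurent (R := ℤ)) hC
    rwa [map_sub, map_mul, map_one] at this
  -- exponent bookkeeping
  set k : ℕ := (m+1).natAbs with hk
  have hk1 : (m+1 : ℤ) ≤ (r:ℤ) * k := by
    have h1 : (m+1 : ℤ) ≤ ((m+1).natAbs : ℤ) := Int.le_natAbs
    have h2 : ((m+1).natAbs : ℤ) ≤ (r:ℤ) * (m+1).natAbs :=
      le_mul_of_one_le_left (Int.natCast_nonneg _) (by exact_mod_cast hr.trans' (by norm_num))
    exact h1.trans h2
  set e : ℕ := ((r:ℤ)*k - (m+1)).toNat with he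
  have hee : (e:ℤ) = (r:ℤ)*k - (m+1) := Int.toNat_of_nonneg (by omega)
  set p : ℤ[X] := (X^e * C) %ₘ Φ with hp
  have hmon : Φ.Monic := StmtAux2.gs_monic hr
  have hdvd1 : Φ ∣ X^e * C - p := ⟨(X^e*C) /ₘ Φ, by
    have h := Polynomial.modByMonic_add_div (X^e*C) Φ
    rw [hp]; linear_combination -h⟩
  have hpdeg : ∀ j ∈ p.support, (j:ℤ) ≤ (r:ℤ) - 2 := by
    intro j hj
    have h1 : j ≤ p.natDegree := le_natDegree_of_mem_supp j hj
    have hp0 : p ≠ 0 := by intro h; rw [h] at hj; simp at hj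
    have h2 : p.natDegree < Φ.natDegree :=
      natDegree_lt_natDegree hp0 (hp ▸ Polynomial.degree_modByMonic_lt (X^e*C) hmon)
    rw [StmtAux2.gs_natDegree hr] at h2
    omega
  set B : LaurentPolynomial ℤ := T (m+1) * toLaurent p with hB
  have hsuppB : B.coeff.support ⊆ Finset.Icc (m + 1) (m + (r : ℤ) - 1) := by
    intro x hx
    rw [hB, show (T (m+1) : LaurentPolynomial ℤ) = AddMonoidAlgebra.single (m+1) (1:ℤ) from rfl,
      AddMonoidAlgebra.support_coeff_single_mul _ 1 (by simp) _] at hx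
    obtain ⟨y, hy, hye⟩ := Finset.mem_map.mp hx
    rw [toLaurent_support] at hy
    obtain ⟨j, hj, hje⟩ := Finset.mem_map.mp hy
    have hjr := hpdeg j hj
    rw [addLeftEmbedding_apply] at hye
    rw [Nat.castEmbedding_apply] at hje
    rw [Finset.mem_Icc]
    omega
  have d1 : toLaurent Φ ∣ toLaurent p - T (e:ℤ) * toLaurent C := by
    have h := map_dvd (Polynomial.toLaurent (R := ℤ)) hdvd1
    rw [map_sub, map_mul, toLaurent_X_pow] at h
    have h' := dvd_neg.mpr h
    rwa [neg_sub] at h'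
  have hTr : toLaurent Φ ∣ T (r:ℤ) - 1 := by
    have h1 : Φ ∣ X^r - 1 := ⟨X - 1, (geom_sum_mul X r).symm⟩
    have := map_dvd (Polynomial.toLaurent (R := ℤ)) h1
    rwa [map_sub, toLaurent_X_pow, map_one] at this
  have d2 : toLaurent Φ ∣ T ((m+1) + (e:ℤ)) - 1 := by
    have h2 : (T (r:ℤ) : LaurentPolynomial ℤ) - 1 ∣ (T (r:ℤ))^k - 1^k :=
      sub_dvd_pow_sub_pow _ _ k
    rw [one_pow, T_pow] at h2
    have h3 : ((k:ℤ) * (r:ℤ)) = (m+1) + (e:ℤ) := by rw [hee]; ring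
    rw [h3] at h2
    exact hTr.trans h2
  have hdvdB : toLaurent Φ ∣ B * toLaurent P - 1 := by
    have hid : B * toLaurent P - 1 =
        (T (m+1) * toLaurent P) * (toLaurent p - T (e:ℤ) * toLaurent C)
        + (toLaurent P * toLaurent C) * (T ((m+1) + (e:ℤ)) - 1)
        + (toLaurent P * toLaurent C - 1) := by
      rw [T_add (m+1) (e:ℤ), hB]; ring
    rw [hid]
    exact dvd_add (dvd_add (d1.mul_left _) (d2.mul_left _)) d3
  refine ⟨B, ⟨hsuppB, hdvdB⟩, ?_⟩
  rintro B' ⟨hs', hd'⟩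
  have hdiff : toLaurent Φ ∣ B' - B := by
    have hident : B' - B = (B' * toLaurent P - 1) * toLaurent C
        - (B * toLaurent P - 1) * toLaurent C
        - (B' - B) * (toLaurent P * toLaurent C - 1) := by ring
    rw [hident]
    exact dvd_sub (dvd_sub (hd'.mul_right _) (hdvdB.mul_right _)) (d3.mul_left _)
  have hsub : (B' - B).coeff.support ⊆ Finset.Icc (m + 1) (m + (r : ℤ) - 1) := by
    intro x hx
    rcases Finset.mem_union.mp (Finsupp.support_sub hx) with h | h
    · exact hs' h
    · exact hsuppB h
  have := StmtAux2.key hr m hsub hdiff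
  exact sub_eq_zero.mp this
end

section
/- Let r ≥ 2 and n ≥ 1 be integers, let a_1, …, a_n be positive integers with gcd(a_i, r) = 1 for all i, and let k be an integer with k + a_1 + ⋯ + a_n ≡ 0 (mod r). Set c = k + n + 1 and m = ⌊c/2⌋. If B ∈ ℤ[t, t⁻¹] is a Laurent polynomial supported in {m+1, …, m+r−1} satisfying B(t) · ∏_{i=1}^n (1 + t + ⋯ + t^{a_i−1}) ≡ 1 modulo Φ_r(t), then B is Gorenstein symmetric of degree k + n + r: for every j ∈ ℤ, the coefficient of t^j in B equals the coefficient of t^{k+n+r−j} in B. -/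
open Polynomial LaurentPolynomial Finset

namespace Stmt3Aux

/-- coefficient of `toLaurent p` at a nonnegative index. -/
lemma toLaurent_coeff (p : ℤ[X]) (n : ℕ) : (toLaurent p).coeff ((n : ℤ)) = p.coeff n := by
  rw [LaurentPolynomial.coeff_toLaurent]
  exact Finsupp.mapDomain_apply Nat.castEmbedding.injective _ _

/-- coefficient of `T s * f`. -/
lemma T_mul_apply (f : LaurentPolynomial ℤ) (s y : ℤ) :
    ((T s : LaurentPolynomial ℤ) * f).coeff y = f.coeff (y - s) := by
  rw [show (T s : LaurentPolynomial ℤ) = AddMonoidAlgebra.single s 1 from rfl,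
    AddMonoidAlgebra.coeff_single_mul_apply, one_mul]
  congr 1
  ring

lemma geom_mul_geom {R : Type*} [CommRing R] (x : R) (a b : ℕ) :
    (∑ i ∈ range a, x ^ i) * (∑ j ∈ range b, (x ^ a) ^ j) = ∑ k ∈ range (a * b), x ^ k := by
  induction b with
  | zero => simp
  | succ b ih =>
    rw [Finset.sum_range_succ, mul_add, ih, Nat.mul_succ, Finset.sum_range_add]
    congr 1
    rw [Finset.sum_mul]
    refine Finset.sum_congr rfl fun i _ => ?_
    rw [← pow_mul, ← pow_add]
    ring_nf

lemma T_prod {ι : Type*} (s : Finset ι) (f : ι → ℤ) :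
    (∏ i ∈ s, (T (f i) : LaurentPolynomial ℤ)) = T (∑ i ∈ s, f i) := by
  classical
  induction s using Finset.cons_induction with
  | empty => simp
  | cons i s hi ih => rw [Finset.prod_cons, Finset.sum_cons, ih, ← T_add]

lemma dvd_prod_sub_one {R : Type*} [CommRing R] {ι : Type*} (d : R) (s : Finset ι) (f : ι → R)
    (h : ∀ i ∈ s, d ∣ f i - 1) : d ∣ (∏ i ∈ s, f i) - 1 := by
  classical
  induction s using Finset.cons_induction with
  | empty => simp
  | cons i s hi ih =>
    rw [Finset.prod_cons]
    have h1 : d ∣ f i - 1 := h i (Finset.mem_cons_self i s)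
    have h2 : d ∣ (∏ j ∈ s, f j) - 1 := ih fun j hj => h j (Finset.mem_cons_of_mem hj)
    have key : f i * (∏ j ∈ s, f j) - 1 =
        f i * ((∏ j ∈ s, f j) - 1) + (f i - 1) := by ring
    rw [key]
    exact dvd_add (Dvd.dvd.mul_left h2 _) h1

section R

variable (r : ℕ)

/-- `Φ` as a polynomial -/
noncomputable def Phi : ℤ[X] := ∑ i ∈ range r, (X : ℤ[X]) ^ i

/-- `Φ` as a Laurent polynomial -/
noncomputable def PhiL : LaurentPolynomial ℤ := toLaurent (Phi r)

lemma PhiL_eq_sum_T : PhiL r = ∑ i ∈ range r, (T (i : ℤ) : LaurentPolynomial ℤ) := by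
  rw [PhiL, Phi, map_sum]
  exact Finset.sum_congr rfl fun i _ => Polynomial.toLaurent_X_pow i

lemma phiL_dvd_T_pow_sub_one : PhiL r ∣ (T (r : ℤ) : LaurentPolynomial ℤ) - 1 := by
  have h : (Phi r) * (X - 1) = X ^ r - 1 := geom_sum_mul X r
  refine ⟨toLaurent (X - 1), ?_⟩
  rw [PhiL, ← map_mul, h]
  simp

lemma phiL_dvd_T_sub_one {z : ℤ} (hz : (r : ℤ) ∣ z) :
    PhiL r ∣ (T z : LaurentPolynomial ℤ) - 1 := by
  obtain ⟨w, rfl⟩ := hz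
  have key : ∀ u : ℕ, PhiL r ∣ (T ((r : ℤ) * u) : LaurentPolynomial ℤ) - 1 := by
    intro u
    have h1 := sub_dvd_pow_sub_pow (T (r : ℤ) : LaurentPolynomial ℤ) 1 u
    rw [one_pow, T_pow] at h1
    have h2 := (phiL_dvd_T_pow_sub_one r).trans h1
    rwa [show (u : ℤ) * (r : ℤ) = (r : ℤ) * u by ring] at h2
  rcases le_or_gt 0 w with hw | hw
  · lift w to ℕ using hw
    exact key w
  · obtain ⟨u, hu⟩ : ∃ u : ℕ, (u : ℤ) = -w := ⟨(-w).toNat, Int.toNat_of_nonneg (by omega)⟩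
    have h1 := key u
    have h2 : (T ((r : ℤ) * w) : LaurentPolynomial ℤ) - 1 =
        -(T ((r : ℤ) * w)) * ((T ((r : ℤ) * u) : LaurentPolynomial ℤ) - 1) := by
      rw [mul_sub, mul_one, neg_mul, ← T_add,
        show (r : ℤ) * w + (r : ℤ) * u = 0 by rw [hu]; ring, T_zero]
      ring
    rw [h2]
    exact Dvd.dvd.mul_left h1 _

/-- inverse of a geometric sum modulo `Φ`. -/
lemma phiL_inv_geom (hr : 2 ≤ r) (a : ℕ) (hcop : Nat.gcd a r = 1) :
    ∃ G : LaurentPolynomial ℤ,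
      PhiL r ∣ toLaurent (∑ j ∈ range a, (X : ℤ[X]) ^ j) * G - 1 := by
  obtain ⟨b, -, hb⟩ := Nat.exists_mul_mod_eq_one_of_coprime (k := r) (n := a) hcop (by omega)
  refine ⟨toLaurent (∑ j ∈ range b, ((X : ℤ[X]) ^ a) ^ j), ?_⟩
  rw [← map_mul, geom_mul_geom]
  have hab : a * b = 1 + r * (a * b / r) := by
    have := Nat.div_add_mod (a * b) r
    omega
  rw [hab, Finset.sum_range_add]
  have h1 : (∑ i ∈ range 1, (X : ℤ[X]) ^ i) = 1 := by simp
  rw [h1, map_add, map_one, add_sub_cancel_left]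
  have h2 : (∑ i ∈ range (r * (a * b / r)), (X : ℤ[X]) ^ (1 + i)) =
      X * ((∑ i ∈ range r, (X : ℤ[X]) ^ i) *
        (∑ j ∈ range (a * b / r), ((X : ℤ[X]) ^ r) ^ j)) := by
    rw [geom_mul_geom, Finset.mul_sum]
    exact Finset.sum_congr rfl fun i _ => by rw [pow_add, pow_one]
  rw [h2, map_mul, map_mul]
  have h3 : PhiL r ∣ toLaurent (∑ i ∈ range r, (X : ℤ[X]) ^ i) := dvd_of_eq rfl
  exact Dvd.dvd.mul_left (Dvd.dvd.mul_right h3 _) _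

/-- `T (N-1) * invert S_N = S_N` -/
lemma T_mul_invert_geom (N : ℕ) (hN : 1 ≤ N) :
    (T ((N : ℤ) - 1) : LaurentPolynomial ℤ) *
      invert (toLaurent (∑ i ∈ range N, (X : ℤ[X]) ^ i)) =
      toLaurent (∑ i ∈ range N, (X : ℤ[X]) ^ i) := by
  have hS : toLaurent (∑ i ∈ range N, (X : ℤ[X]) ^ i) =
      ∑ i ∈ range N, (T (i : ℤ) : LaurentPolynomial ℤ) := by
    rw [map_sum]; exact Finset.sum_congr rfl fun i _ => Polynomial.toLaurent_X_pow i
  rw [hS, map_sum, Finset.mul_sum]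
  have h1 : ∀ i ∈ range N, (T ((N : ℤ) - 1) : LaurentPolynomial ℤ) * invert (T (i : ℤ)) =
      T ((((N - 1 - i : ℕ)) : ℤ)) := by
    intro i hi
    rw [Finset.mem_range] at hi
    rw [invert_T, ← T_add]
    congr 1
    omega
  rw [Finset.sum_congr rfl h1]
  exact Finset.sum_range_reflect (fun i => (T (i : ℤ) : LaurentPolynomial ℤ)) N

/-- coefficient of `C μ * T e * Φ` at `e + i` for `i < r` equals `μ`. -/
lemma coeff_C_T_Phi (μ e : ℤ) (i : ℕ) (hi : i < r) :
    (((C μ : LaurentPolynomial ℤ) * T e * PhiL r : LaurentPolynomial ℤ)).coeff (e + i) = μ := by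
  rw [PhiL_eq_sum_T, Finset.mul_sum]
  have h1 : ∀ i' ∈ range r, (C μ : LaurentPolynomial ℤ) * T e * T (i' : ℤ) =
      AddMonoidAlgebra.single (e + i') μ := by
    intro i' _
    rw [mul_assoc, ← T_add, ← single_eq_C_mul_T]
  rw [Finset.sum_congr rfl h1, AddMonoidAlgebra.coeff_sum, Finset.sum_apply']
  have h2 : ∀ i' ∈ range r, (AddMonoidAlgebra.single (e + (i' : ℤ)) μ).coeff (e + (i : ℤ)) =
      if i' = i then μ else 0 := by
    intro i' _
    rw [AddMonoidAlgebra.coeff_single, Finsupp.single_apply]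
    by_cases h : i' = i
    · rw [if_pos (by rw [h]), if_pos h]
    · rw [if_neg (fun hh => h (by exact_mod_cast (by omega : (i' : ℤ) = i))), if_neg h]
  rw [Finset.sum_congr rfl h2, Finset.sum_ite_eq' (range r) i fun _ => μ]
  simp [Finset.mem_range.mpr hi]

/-- The key structure lemma: a multiple of `Φ_r` supported in a window of length `r`
is a constant multiple of `T m * Φ_r`. -/
lemma window_lemma (hr : 2 ≤ r) (m : ℤ) (D : LaurentPolynomial ℤ)
    (hdvd : PhiL r ∣ D) (hsupp : D.coeff.support ⊆ Finset.Icc m (m + r - 1)) :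
    ∃ μ : ℤ, D = (C μ : LaurentPolynomial ℤ) * T m * PhiL r := by
  classical
  obtain ⟨g, hg⟩ := hdvd
  obtain ⟨w, q, hq⟩ := g.exists_T_pow
  set p : ℤ[X] := Phi r * q with hp
  have hpL : toLaurent p = D * T (w : ℤ) := by
    rw [hp, map_mul, ← PhiL, hq, hg, mul_assoc]
  have hcoeff : ∀ j : ℕ, p.coeff j = D.coeff ((j : ℤ) - w) := by
    intro j
    rw [← toLaurent_coeff, hpL, mul_comm, T_mul_apply]
  have hDout : ∀ y : ℤ, y < m ∨ m + r - 1 < y → D.coeff y = 0 := by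
    intro y hy
    by_contra h
    have hmem := hsupp (Finsupp.mem_support_iff.mpr h)
    rw [Finset.mem_Icc] at hmem
    omega
  by_cases hD : D = 0
  · exact ⟨0, by simp [hD]⟩
  have hq0 : q ≠ 0 := by
    rintro rfl
    have h0 : g * T ((w : ℕ) : ℤ) = 0 := by rw [← hq, map_zero]
    have hg0 : g = 0 := by
      calc g = g * T ((w : ℕ) : ℤ) * T (-((w : ℕ) : ℤ)) := by
              rw [mul_assoc, ← T_add, add_neg_cancel, T_zero, mul_one]
        _ = 0 := by rw [h0, zero_mul]
    exact hD (by rw [hg, hg0, mul_zero])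
  have hPhi_coeff : ∀ j : ℕ, (Phi r).coeff j = if j < r then 1 else 0 := by
    intro j
    rw [Phi, Polynomial.finset_sum_coeff]
    by_cases hj : j < r
    · rw [Finset.sum_eq_single j
        (fun b _ hb => by rw [Polynomial.coeff_X_pow, if_neg (fun h => hb h.symm)])
        (fun h => absurd (Finset.mem_range.mpr hj) h)]
      simp [hj]
    · rw [if_neg hj]
      refine Finset.sum_eq_zero fun b hb => ?_
      rw [Finset.mem_range] at hb
      rw [Polynomial.coeff_X_pow]
      simp only [ite_eq_right_iff]
      intro h; omega
  have hPhi0 : Phi r ≠ 0 := by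
    intro h
    have h0 := hPhi_coeff 0
    rw [h, Polynomial.coeff_zero, if_pos (by omega)] at h0
    exact one_ne_zero h0.symm
  have hp0 : p ≠ 0 := mul_ne_zero hPhi0 hq0
  have hPhi_deg : (Phi r).natDegree = r - 1 := by
    refine le_antisymm ?_ ?_
    · rw [Polynomial.natDegree_le_iff_coeff_eq_zero]
      intro j hj
      rw [hPhi_coeff]
      simp only [ite_eq_right_iff]
      intro h; omega
    · refine Polynomial.le_natDegree_of_ne_zero ?_
      rw [hPhi_coeff, if_pos (by omega)]
      exact one_ne_zero
  have hPhi_tdeg : (Phi r).natTrailingDegree = 0 := by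
    refine Nat.le_zero.mp (Polynomial.natTrailingDegree_le_of_ne_zero ?_)
    rw [hPhi_coeff, if_pos (by omega)]
    exact one_ne_zero
  set dq := q.natDegree with hdq
  set tq := q.natTrailingDegree with htq
  have hpdeg : p.natDegree = r - 1 + dq := by
    rw [hp, Polynomial.natDegree_mul hPhi0 hq0, hPhi_deg]
  have hptdeg : p.natTrailingDegree = tq := by
    rw [hp, Polynomial.natTrailingDegree_mul hPhi0 hq0, hPhi_tdeg, zero_add]
  set u : ℤ := m + w with hu
  have hpcoeff_low : ∀ j : ℕ, (j : ℤ) < u → p.coeff j = 0 := by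
    intro j hj
    rw [hcoeff]
    exact hDout _ (Or.inl (by omega))
  have hpcoeff_high : ∀ j : ℕ, u + r - 1 < (j : ℤ) → p.coeff j = 0 := by
    intro j hj
    rw [hcoeff]
    exact hDout _ (Or.inr (by omega))
  have hdeg_le : ((p.natDegree : ℤ)) ≤ u + r - 1 := by
    by_contra h
    push_neg at h
    exact Polynomial.leadingCoeff_ne_zero.mpr hp0 (hpcoeff_high _ h)
  have htdeg_ge : u ≤ (p.natTrailingDegree : ℤ) := by
    by_contra h
    push_neg at h
    exact Polynomial.trailingCoeff_nonzero_iff_nonzero.mpr hp0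
      (hpcoeff_low _ h)
  have hdq_le_tq : dq ≤ tq := by
    rw [hpdeg] at hdeg_le
    rw [hptdeg] at htdeg_ge
    omega
  have hdq_eq : tq = dq := le_antisymm (Polynomial.natTrailingDegree_le_natDegree q) hdq_le_tq
  set μ := q.coeff dq with hμ
  have hq_mono : q = Polynomial.C μ * X ^ dq := by
    ext j
    rw [Polynomial.coeff_C_mul, Polynomial.coeff_X_pow]
    rcases lt_trichotomy j dq with h | h | h
    · rw [Polynomial.coeff_eq_zero_of_lt_natTrailingDegree (by omega)]
      simp [Nat.ne_of_lt h]
    · subst h; simp [hμ]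
    · rw [Polynomial.coeff_eq_zero_of_natDegree_lt (by omega)]
      simp [Nat.ne_of_gt h]
  have hgL : g = (C μ : LaurentPolynomial ℤ) * T ((dq : ℤ) - w) := by
    have hg2 : toLaurent q * T (-(w : ℤ)) = g := by
      rw [hq, mul_assoc, ← T_add, add_neg_cancel, T_zero, mul_one]
    rw [← hg2, hq_mono, map_mul, Polynomial.toLaurent_C, Polynomial.toLaurent_X_pow,
      mul_assoc, ← T_add, sub_eq_add_neg]
  have hDform : D = (C μ : LaurentPolynomial ℤ) * T ((dq : ℤ) - w) * PhiL r := by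
    rw [hg, hgL]; ring
  by_cases hμ0 : μ = 0
  · refine ⟨0, ?_⟩
    rw [hDform, hμ0]
    simp
  have he1 : D.coeff ((dq : ℤ) - w + ((0 : ℕ) : ℤ)) = μ := by
    rw [hDform]; exact coeff_C_T_Phi r μ _ 0 (by omega)
  have he2 : D.coeff ((dq : ℤ) - w + ((r - 1 : ℕ) : ℤ)) = μ := by
    rw [hDform]; exact coeff_C_T_Phi r μ _ (r - 1) (by omega)
  have hm1 : m ≤ (dq : ℤ) - w := by
    by_contra h
    push_neg at h
    rw [hDout _ (Or.inl (by push_cast; omega))] at he1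
    exact hμ0 he1.symm
  have hm2 : (dq : ℤ) - w + ((r - 1 : ℕ) : ℤ) ≤ m + r - 1 := by
    by_contra h
    push_neg at h
    rw [hDout _ (Or.inr (by omega))] at he2
    exact hμ0 he2.symm
  have hew : (dq : ℤ) - w = m := by omega
  exact ⟨μ, by rw [hDform, hew]⟩

end R

end Stmt3Aux

open Stmt3Aux

/-- Let `r ≥ 2`, `n ≥ 1`, `a₁, …, aₙ` positive integers coprime to `r`, and `k ∈ ℤ` with
`k + a₁ + ⋯ + aₙ ≡ 0 (mod r)`. Set `c = k + n + 1` and `m = ⌊c/2⌋`. If the Laurent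
polynomial `B ∈ ℤ[t,t⁻¹]` is supported in `{m+1, …, m+r-1}` and satisfies
`B(t) ⬝ ∏ᵢ (1 + t + ⋯ + t^(aᵢ-1)) ≡ 1` modulo `Φ_r(t) = 1 + t + ⋯ + t^(r-1)`, then `B`
is Gorenstein symmetric of degree `k + n + r`: the coefficient of `t^j` in `B` equals
the coefficient of `t^(k+n+r-j)` for every `j ∈ ℤ`. -/
theorem stmt_3 (r n : ℕ) (hr : 2 ≤ r) (hn : 1 ≤ n) (a : Fin n → ℕ)
    (ha : ∀ i, 1 ≤ a i) (hcop : ∀ i, Nat.gcd (a i) r = 1) (k : ℤ)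
    (hk : (k + ∑ i, (a i : ℤ)) % (r : ℤ) = 0)
    (c m : ℤ) (hc : c = k + n + 1) (hm : m = Int.fdiv c 2)
    (B : LaurentPolynomial ℤ)
    (hsupp : B.coeff.support ⊆ Finset.Icc (m + 1) (m + (r : ℤ) - 1))
    (hinv : (∑ i ∈ Finset.range r, (X : ℤ[X]) ^ i).toLaurent ∣
      B * ∏ i, (∑ j ∈ Finset.range (a i), (X : ℤ[X]) ^ j).toLaurent - 1) :
    ∀ j : ℤ, B.coeff j = B.coeff (k + n + r - j) := by
  classical
  set Φ : LaurentPolynomial ℤ := PhiL r with hΦ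
  have hΦ_eq : (∑ i ∈ Finset.range r, (X : ℤ[X]) ^ i).toLaurent = Φ := rfl
  set P : LaurentPolynomial ℤ := ∏ i, (∑ j ∈ Finset.range (a i), (X : ℤ[X]) ^ j).toLaurent
    with hP
  rw [hΦ_eq] at hinv
  have hcm : c = 2 * m ∨ c = 2 * m + 1 := by
    rw [hm, Int.fdiv_eq_ediv_of_nonneg _ (by norm_num)]
    omega
  set Bt : LaurentPolynomial ℤ := (T (k + n + r) : LaurentPolynomial ℤ) * invert B with hBt
  have hBt_apply : ∀ j : ℤ, Bt.coeff j = B.coeff (k + n + r - j) := by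
    intro j
    rw [hBt, T_mul_apply, invert_apply]
    congr 1
    ring
  have hBout : ∀ y : ℤ, y < m + 1 ∨ m + r - 1 < y → B.coeff y = 0 := by
    intro y hy
    by_contra h
    have hmem := hsupp (Finsupp.mem_support_iff.mpr h)
    rw [Finset.mem_Icc] at hmem
    omega
  -- s = ∑ (a i - 1)
  set s : ℤ := ∑ i, ((a i : ℤ) - 1) with hs
  have hs_eq : s = (∑ i, (a i : ℤ)) - n := by
    rw [hs, Finset.sum_sub_distrib]
    simp
  -- the main congruence : Φ ∣ B - Bt
  have hmain : Φ ∣ B - Bt := by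
    choose G hGi using fun i => phiL_inv_geom r hr (a i) (hcop i)
    have hPG : Φ ∣ P * (∏ i, G i) - 1 := by
      rw [hP, ← Finset.prod_mul_distrib]
      exact dvd_prod_sub_one _ _ _ fun i _ => hGi i
    have hinv2 : invert Φ ∣ invert B * invert P - 1 := by
      have h := map_dvd (invert (R := ℤ)) hinv
      simpa only [map_sub, map_mul, map_one] using h
    have hΦinv : (T ((r : ℤ) - 1) : LaurentPolynomial ℤ) * invert Φ = Φ := by
      have h := T_mul_invert_geom r (by omega)
      rwa [hΦ_eq] at h
    have hPinv : (T s : LaurentPolynomial ℤ) * invert P = P := by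
      rw [hP, map_prod, hs, ← T_prod, ← Finset.prod_mul_distrib]
      exact Finset.prod_congr rfl fun i _ => T_mul_invert_geom (a i) (ha i)
    obtain ⟨y, hy⟩ := hinv2
    have hBtP : Φ ∣ Bt * P - (T (k + n + r + s) : LaurentPolynomial ℤ) := by
      refine ⟨(T (k + n + 1 + s) : LaurentPolynomial ℤ) * y, ?_⟩
      have expand : Bt * P - (T (k + n + r + s) : LaurentPolynomial ℤ) =
          (T (k + n + r + s) : LaurentPolynomial ℤ) * (invert B * invert P - 1) := by
        calc Bt * P - (T (k + n + r + s) : LaurentPolynomial ℤ)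
            = ((T (k + n + r) : LaurentPolynomial ℤ) * invert B) *
                ((T s : LaurentPolynomial ℤ) * invert P) -
                (T (k + n + r + s) : LaurentPolynomial ℤ) := by rw [hPinv, ← hBt]
          _ = (T (k + n + r + s) : LaurentPolynomial ℤ) * (invert B * invert P - 1) := by
              have hTsplit : (T (k + n + (r : ℤ) + s) : LaurentPolynomial ℤ) =
                  T (k + n + (r : ℤ)) * T s := by rw [← T_add]
              rw [hTsplit]
              ring
      rw [expand, hy, show (k + n + r + s : ℤ) = (k + n + 1 + s) + ((r : ℤ) - 1) from by ring,
        T_add, mul_assoc, mul_comm (T ((r:ℤ) - 1)) (invert Φ * y), mul_assoc,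
        mul_comm y (T ((r:ℤ)-1)), ← mul_assoc (invert Φ), mul_comm (invert Φ) (T ((r:ℤ)-1)),
        hΦinv]
      ring
    have hT1 : Φ ∣ (T (k + n + r + s) : LaurentPolynomial ℤ) - 1 := by
      refine phiL_dvd_T_sub_one r ?_
      have hdvd : (r : ℤ) ∣ (k + ∑ i, (a i : ℤ)) := Int.dvd_of_emod_eq_zero hk
      rw [hs_eq]
      obtain ⟨v, hv⟩ := hdvd
      exact ⟨v + 1, by rw [show k + n + r + ((∑ i, (a i : ℤ)) - n) =
        (k + ∑ i, (a i : ℤ)) + r from by ring, hv]; ring⟩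
    have hBtP1 : Φ ∣ Bt * P - 1 := by
      have h := dvd_add hBtP hT1
      rwa [sub_add_sub_cancel] at h
    have hdiff : Φ ∣ (B - Bt) * P := by
      have h := dvd_sub hinv hBtP1
      rwa [show B * P - 1 - (Bt * P - 1) = (B - Bt) * P from by ring] at h
    have h2 : Φ ∣ (B - Bt) * (P * (∏ i, G i) - 1) := Dvd.dvd.mul_left hPG _
    have h3 : Φ ∣ (B - Bt) * P * (∏ i, G i) := Dvd.dvd.mul_right hdiff _
    have h4 := dvd_sub h3 h2
    rwa [show (B - Bt) * P * (∏ i, G i) - (B - Bt) * (P * (∏ i, G i) - 1) = B - Bt from by ring]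
      at h4
  -- support of B - Bt
  have hBtout : ∀ y : ℤ, y < m ∨ m + r - 1 < y → Bt.coeff y = 0 := by
    intro y hy
    rw [hBt_apply]
    refine hBout _ ?_
    rcases hcm with h | h <;> omega
  have hDsupp : (B - Bt).coeff.support ⊆ Finset.Icc m (m + r - 1) := by
    intro y hy
    rw [Finsupp.mem_support_iff] at hy
    rw [Finset.mem_Icc]
    by_contra h
    push_neg at h
    have hy' : y < m ∨ m + r - 1 < y := by
      by_cases h1 : y < m
      · exact Or.inl h1
      · exact Or.inr (h (by omega))
    rw [AddMonoidAlgebra.coeff_sub, Finsupp.sub_apply, hBout _ (by rcases hy' with h' | h' <;> omega),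
      hBtout _ hy', sub_zero] at hy
    exact hy rfl
  obtain ⟨μ, hμ⟩ := window_lemma r hr m (B - Bt) hmain hDsupp
  -- show μ = 0
  have hc1 : (B - Bt).coeff (m + ((0 : ℕ) : ℤ)) = μ := by
    rw [hμ]; exact coeff_C_T_Phi r μ m 0 (by omega)
  have hc2 : (B - Bt).coeff (m + ((r - 1 : ℕ) : ℤ)) = μ := by
    rw [hμ]; exact coeff_C_T_Phi r μ m (r - 1) (by omega)
  have hcast : ((r - 1 : ℕ) : ℤ) = (r : ℤ) - 1 := by omega
  rw [Nat.cast_zero, add_zero, AddMonoidAlgebra.coeff_sub, Finsupp.sub_apply, hBt_apply] at hc1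
  rw [hcast, show m + ((r : ℤ) - 1) = m + (r : ℤ) - 1 from by ring,
    AddMonoidAlgebra.coeff_sub, Finsupp.sub_apply, hBt_apply] at hc2
  have hBm : B.coeff m = 0 := hBout m (by omega)
  have hμ0 : μ = 0 := by
    rcases hcm with h | h
    · -- c = 2m : k + n + r - m = m + r - 1
      have e1 : k + n + (r : ℤ) - m = m + r - 1 := by omega
      have e2 : k + n + (r : ℤ) - (m + r - 1) = m := by omega
      rw [e1, hBm, zero_sub] at hc1
      rw [e2, hBm, sub_zero] at hc2
      linarith
    · -- c = 2m+1 : k + n + r - m = m + r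
      have e1 : k + n + (r : ℤ) - m = m + r := by omega
      rw [e1, hBm, hBout (m + r) (by omega), sub_zero] at hc1
      exact hc1.symm
  have hBBt : B = Bt := by
    have h0 : B - Bt = 0 := by
      rw [hμ, hμ0]
      simp
    exact sub_eq_zero.mp h0
  intro j
  rw [← hBt_apply j, ← hBBt]
end
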